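/- Let A be a type, let x and y be lists over the signed alphabet A × Bool, and let s be a signed letter. Any reduction sequence for the list x ++ [s, s⁻¹] ++ y can be transformed, by a finite chain of swap and overlap operations, into a reduction sequence whose first step deletes the adjacent inverse pair [s, s⁻¹] at position length(x). -/

import Mathlib

/-- The inverse of a signed letter `s = (a, b)` is `s⁻¹ = (a, !b)`. -/
def sinv {A : Type*} (s : A × Bool) : A × Bool := (s.1, !s.2)

/-- A single reduction step at recorded position `p`: it deletes the adjacent inverse
pair `[s, s⁻¹]` occurring after a prefix of length `p`. -/
def StepAt {A : Type*} (p : ℕ) (w v : List (A × Bool)) : Prop :=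
  ∃ (x y : List (A × Bool)) (s : A × Bool),
    x.length = p ∧ w = x ++ [s, sinv s] ++ y ∧ v = x ++ y

/-- `RedSeq w ps` : the list of positions `ps` is a reduction sequence for `w`, i.e. a
finite sequence of single reduction steps (each recording the position of the deleted
adjacent inverse pair) beginning at `w` and ending at the empty list. -/
inductive RedSeq {A : Type*} : List (A × Bool) → List ℕ → Prop
  | nil : RedSeq [] []
  | cons {p : ℕ} {w v : List (A × Bool)} {ps : List ℕ} :
      StepAt p w v → RedSeq v ps → RedSeq w (p :: ps)

/-- A single swap or overlap operation performed somewhere in a reduction sequence of the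
list in the first argument.
* `swap` exchanges two consecutive independent steps (the deleted pairs do not overlap),
  performing the two deletions in the opposite order;
* `overlap` replaces the step deleting the pair `a a⁻¹` in a list `x ++ [a, a⁻¹, a] ++ y`
  by the step deleting the pair `a⁻¹ a` at the next position (both yield `x ++ [a] ++ y`);
* `tail` applies the operation deeper in the sequence. -/
inductive TransfStep {A : Type*} : List (A × Bool) → List ℕ → List ℕ → Prop
  | swap (x : List (A × Bool)) (a : A × Bool) (y : List (A × Bool)) (b : A × Bool)
      (z : List (A × Bool)) (ps : List ℕ) :
      TransfStep (x ++ [a, sinv a] ++ y ++ [b, sinv b] ++ z)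
        ((x.length + 2 + y.length) :: x.length :: ps)
        (x.length :: (x.length + y.length) :: ps)
  | overlap (x : List (A × Bool)) (a : A × Bool) (y : List (A × Bool)) (ps : List ℕ) :
      TransfStep (x ++ [a, sinv a, a] ++ y) (x.length :: ps) ((x.length + 1) :: ps)
  | tail {p : ℕ} {w v : List (A × Bool)} {ps qs : List ℕ} :
      StepAt p w v → TransfStep v ps qs → TransfStep w (p :: ps) (p :: qs)

/-- `Transform w ps qs` : the reduction sequence `ps` for `w` can be transformed into the
reduction sequence `qs` by a finite chain of swap and overlap operations (each operation
may be used in either direction). -/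
def Transform {A : Type*} (w : List (A × Bool)) : List ℕ → List ℕ → Prop :=
  Relation.ReflTransGen (fun ps qs => TransfStep w ps qs ∨ TransfStep w qs ps)

/-!
Induction on the reduction sequence. Its first step deletes a pair that either is `[s, s⁻¹]`
itself, overlaps it (the word contains `s s⁻¹ s` or `s⁻¹ s s⁻¹` there, and one overlap operation
turns the step into the deletion of `[s, s⁻¹]`), or is disjoint from it. In the disjoint case the
rest of the sequence can by induction be transformed to begin with the deletion of `[s, s⁻¹]`,
and a swap then brings that deletion to the front.
-/

section

variable {A : Type*}

@[simp]
lemma sinv_sinv (s : A × Bool) : sinv (sinv s) = s := by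
  simp [sinv]

lemma StepAt.mk (x y : List (A × Bool)) (s : A × Bool) :
    StepAt x.length (x ++ [s, sinv s] ++ y) (x ++ y) :=
  ⟨x, y, s, rfl, rfl, rfl⟩

lemma eq_or_overlap_or_disjoint_of_length_le {x y x' y' : List (A × Bool)} {s t : A × Bool}
    (h : x ++ [s, sinv s] ++ y = x' ++ [t, sinv t] ++ y') (hle : x.length ≤ x'.length) :
    (x' = x ∧ t = s ∧ y' = y) ∨ (x' = x ++ [s] ∧ t = sinv s ∧ y = s :: y') ∨
      ∃ m, x' = x ++ [s, sinv s] ++ m ∧ y = m ++ [t, sinv t] ++ y' := by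
  simp only [List.append_assoc] at h
  obtain ⟨m, rfl, hm⟩ : ∃ m, x' = x ++ m ∧ [s, sinv s] ++ y = m ++ [t, sinv t] ++ y' := by
    rcases List.append_eq_append_iff.mp h with ⟨m, hx, hm⟩ | ⟨m, hx, hm⟩
    · exact ⟨m, hx, by simpa using hm⟩
    · obtain rfl : m = [] := by simpa [hx] using hle
      exact ⟨[], by simpa using hx.symm, by simpa using hm.symm⟩
  rcases m with _ | ⟨u, _ | ⟨v, m⟩⟩
  · simp_all
  · simp only [List.cons_append, List.nil_append, List.cons.injEq] at hm
    obtain ⟨rfl, hs, rfl⟩ := hm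
    simp [← hs]
  · simp only [List.cons_append, List.cons.injEq, List.nil_append] at hm
    obtain ⟨rfl, rfl, rfl⟩ := hm
    simp

namespace Transform

variable {w : List (A × Bool)} {ps qs : List ℕ}

lemma symm (h : Transform w ps qs) : Transform w qs ps :=
  Std.Symm.symm (r := Relation.ReflTransGen (Relation.SymmGen (TransfStep w))) _ _ h

lemma cons {p : ℕ} {v : List (A × Bool)} (hs : StepAt p w v) (h : Transform v ps qs) :
    Transform w (p :: ps) (p :: qs) :=
  Relation.ReflTransGen.lift (p :: ·) (fun _ _ h => h.imp (.tail hs) (.tail hs)) _ _ h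

lemma swap (x : List (A × Bool)) (a : A × Bool) (y : List (A × Bool)) (b : A × Bool)
    (z : List (A × Bool)) (ps : List ℕ) :
    Transform (x ++ [a, sinv a] ++ y ++ [b, sinv b] ++ z)
      ((x ++ [a, sinv a] ++ y).length :: x.length :: ps) (x.length :: (x ++ y).length :: ps) := by
  have hlen : (x ++ [a, sinv a] ++ y).length = x.length + 2 + y.length := by simp; omega
  rw [hlen, List.length_append]
  exact .single (.inl (.swap x a y b z ps))

lemma overlap (x : List (A × Bool)) (a : A × Bool) (y : List (A × Bool)) (ps : List ℕ) :
    Transform (x ++ [a, sinv a, a] ++ y) (x.length :: ps) ((x.length + 1) :: ps) :=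
  .single (.inl (.overlap x a y ps))

end Transform

lemma RedSeq.exists_transform_cons {w : List (A × Bool)} {ps : List ℕ} (h : RedSeq w ps)
    (x y : List (A × Bool)) (s : A × Bool) (hw : w = x ++ [s, sinv s] ++ y) :
    ∃ qs, Transform w ps (x.length :: qs) ∧ RedSeq (x ++ y) qs := by
  induction h generalizing x y with
  | nil => simp at hw
  | @cons _ _ _ ps hstep hrest ih =>
    obtain ⟨x', y', t, rfl, rfl, rfl⟩ := hstep
    rcases le_total x.length x'.length with hle | hle
    · rcases eq_or_overlap_or_disjoint_of_length_le hw.symm hle with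
        ⟨rfl, rfl, rfl⟩ | ⟨rfl, rfl, rfl⟩ | ⟨m, rfl, rfl⟩
      · exact ⟨ps, .refl, hrest⟩
      · refine ⟨ps, ?_, by simpa using hrest⟩
        simpa using (Transform.overlap x s y' ps).symm
      · obtain ⟨qs, hT, hR⟩ := ih x (m ++ y') (by simp)
        refine ⟨(x ++ m).length :: qs, ?_, ?_⟩
        · exact (Transform.cons (StepAt.mk _ y' t) hT).trans (Transform.swap x s m t y' qs)
        · simpa using RedSeq.cons (StepAt.mk (x ++ m) y' t) (by simpa using hR)
    · rcases eq_or_overlap_or_disjoint_of_length_le hw hle with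
        ⟨rfl, rfl, rfl⟩ | ⟨rfl, rfl, rfl⟩ | ⟨m, rfl, rfl⟩
      · exact ⟨ps, .refl, hrest⟩
      · refine ⟨ps, ?_, by simpa using hrest⟩
        simpa using Transform.overlap x' t y ps
      · obtain ⟨qs, hT, hR⟩ := ih (x' ++ m) y (by simp)
        refine ⟨x'.length :: qs, ?_, ?_⟩
        · have h1 := Transform.cons (StepAt.mk x' _ t) hT
          rw [hw] at h1 ⊢
          exact h1.trans (Transform.swap x' t m s y qs).symm
        · simpa using RedSeq.cons (StepAt.mk x' (m ++ y) t) (by simpa using hR)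

end

/-- Any reduction sequence for the list `x ++ [s, s⁻¹] ++ y` can be
transformed, by a finite chain of swap and overlap operations, into a reduction sequence
whose first step deletes the adjacent inverse pair `[s, s⁻¹]` at position `length x`
(and then continues with a reduction sequence for `x ++ y`). -/
theorem transform_to_first_step {A : Type*} (x y : List (A × Bool)) (s : A × Bool)
    (ps : List ℕ) (h : RedSeq (x ++ [s, sinv s] ++ y) ps) :
    ∃ qs : List ℕ, Transform (x ++ [s, sinv s] ++ y) ps (x.length :: qs) ∧
      RedSeq (x ++ y) qs :=
  h.exists_transform_cons x y s rfl
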